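/- arXiv:2307.12357 — 5 statements merged into one kernel-verified Lean document; each statement's English description precedes it below -/
import Mathlib

section
/- For any nonnegative integer n and all r, k > 0, the n-th partial derivative in r of G(r,k) = sin(kr)/r satisfies |∂ⁿ/∂rⁿ (sin(kr)/r)| ≤ kⁿ⁺¹/(n+1). -/
/-!
On `r ≠ 0`, `sin (k r) / r = ∫₀ᵏ cos (t r) dt`. Differentiating under the integral sign `n` times,
and writing `∂ₓⁿ cos (t x) = tⁿ cos (t x + n π/2)`, gives
`∂ⁿ/∂rⁿ (sin (k r) / r) = ∫₀ᵏ tⁿ cos (t r + n π/2) dt`, whose absolute value is at most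
`∫₀ᵏ tⁿ dt = kⁿ⁺¹/(n+1)`.
-/

open Real MeasureTheory intervalIntegral

noncomputable def cosMoment (k : ℝ) (n : ℕ) (x : ℝ) : ℝ :=
  ∫ t in (0 : ℝ)..k, t ^ n * cos (t * x + n * (π / 2))

lemma hasDerivAt_pow_mul_cos_mul_add (t : ℝ) (n : ℕ) (x : ℝ) :
    HasDerivAt (fun x => t ^ n * cos (t * x + n * (π / 2)))
      (t ^ (n + 1) * cos (t * x + (n + 1 : ℕ) * (π / 2))) x := by
  have hphase : HasDerivAt (fun x : ℝ => t * x + n * (π / 2)) t x := by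
    simpa using ((hasDerivAt_id x).const_mul t).add_const (n * (π / 2))
  refine (((hasDerivAt_cos _).comp x hphase).const_mul (t ^ n)).congr_deriv ?_
  rw [show t * x + ((n + 1 : ℕ) : ℝ) * (π / 2) = t * x + n * (π / 2) + π / 2 by push_cast; ring,
    cos_add_pi_div_two]
  ring

lemma hasDerivAt_cosMoment (k : ℝ) (n : ℕ) (x₀ : ℝ) :
    HasDerivAt (cosMoment k n) (cosMoment k (n + 1) x₀) x₀ := by
  have hcont (m : ℕ) (x : ℝ) :
      Continuous (fun t : ℝ => t ^ m * cos (t * x + m * (π / 2))) := by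
    fun_prop
  refine (hasDerivAt_integral_of_dominated_loc_of_deriv_le
    (F' := fun x t => t ^ (n + 1) * cos (t * x + (n + 1 : ℕ) * (π / 2)))
    (bound := fun t => |t| ^ (n + 1)) (Metric.ball_mem_nhds x₀ one_pos)
    (.of_forall fun x => (hcont n x).aestronglyMeasurable)
    ((hcont n x₀).intervalIntegrable 0 k) (hcont (n + 1) x₀).aestronglyMeasurable
    ?_ ((continuous_abs.pow (n + 1)).intervalIntegrable 0 k)
    (.of_forall fun t _ x _ => hasDerivAt_pow_mul_cos_mul_add t n x)).2
  refine .of_forall fun t _ x _ => ?_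
  rw [norm_mul, norm_pow, norm_eq_abs]
  exact mul_le_of_le_one_right (by positivity) (abs_cos_le_one _)

lemma iteratedDeriv_cosMoment_zero (k : ℝ) (n : ℕ) :
    iteratedDeriv n (cosMoment k 0) = cosMoment k n := by
  induction n with
  | zero => rfl
  | succ m ih =>
    funext x
    rw [iteratedDeriv_succ, ih]
    exact (hasDerivAt_cosMoment k m x).deriv

lemma cosMoment_zero_eq (k : ℝ) {x : ℝ} (hx : x ≠ 0) : cosMoment k 0 x = sin (k * x) / x := by
  simp only [cosMoment, pow_zero, Nat.cast_zero, zero_mul, add_zero, one_mul]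
  rw [integral_comp_mul_right cos hx, integral_cos]
  simp [div_eq_inv_mul]

lemma iteratedDeriv_sin_mul_div_eq_cosMoment (k : ℝ) (n : ℕ) {r : ℝ} (hr : r ≠ 0) :
    iteratedDeriv n (fun x : ℝ => sin (k * x) / x) r = cosMoment k n r := by
  have heq : (fun x : ℝ => sin (k * x) / x) =ᶠ[nhds r] cosMoment k 0 := by
    filter_upwards [isOpen_ne.mem_nhds hr] with x hx
    exact (cosMoment_zero_eq k hx).symm
  rw [heq.iteratedDeriv_eq n, iteratedDeriv_cosMoment_zero]

lemma abs_cosMoment_le {k : ℝ} (hk : 0 ≤ k) (n : ℕ) (x : ℝ) :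
    |cosMoment k n x| ≤ k ^ (n + 1) / (n + 1) := by
  calc |cosMoment k n x| ≤ ∫ t in (0 : ℝ)..k, t ^ n := by
        rw [← norm_eq_abs, cosMoment]
        refine norm_integral_le_of_norm_le hk (.of_forall fun t ht => ?_)
          ((continuous_pow n).intervalIntegrable 0 k)
        rw [norm_mul, norm_pow, norm_eq_abs, abs_of_pos ht.1]
        exact mul_le_of_le_one_right (pow_nonneg ht.1.le n) (abs_cos_le_one _)
    _ = k ^ (n + 1) / (n + 1) := by simp [integral_pow]

/-- For every `n : ℕ` and all `r, k > 0`, the `n`-th derivative in `r` of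
`G(r,k) = sin(kr)/r` satisfies `|∂ⁿG/∂rⁿ| ≤ kⁿ⁺¹/(n+1)`. -/
theorem stmt1 (k : ℝ) (hk : 0 < k) (n : ℕ) (r : ℝ) (hr : 0 < r) :
    |iteratedDeriv n (fun x : ℝ => Real.sin (k * x) / x) r| ≤ k ^ (n + 1) / (n + 1) := by
  rw [iteratedDeriv_sin_mul_div_eq_cosMoment k n hr.ne']
  exact abs_cosMoment_le hk.le n r
end

section
/- Let μ₁², …, μ_N² be N ≥ 2 distinct nonzero complex numbers with C_i = ∏_{j≠i} μ_j²/(μ_j² - μ_i²), and suppose each μ_i has positive real part. Then the function ρ(r) = (1/(4πr))·∑_{i=1}^N C_i·μ_i²·e^{-μ_i r} extends to an analytic function on [0,∞) whose Taylor coefficients of orders r¹, r³, …, r^{2N-5} (odd orders up to 2N-5) all vanish, while the coefficient of r^{2N-3} is nonzero. -/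
/-!
Write `F(z) = ∑ C_i μ_i² e^{-μ_i z} / (4π)`. The weights `C_i` are the values at `0` of the
Lagrange basis polynomials for the nodes `μ_i²`, so interpolating `X^k` (`1 ≤ k < N`) and
`X^N - ∏ (X - μ_i²)` gives `∑ C_i (μ_i²)^k = 0` and `∑ C_i (μ_i²)^N = (-1)^(N+1) ∏ μ_i² ≠ 0`.
In particular `F(0) = 0`, so `ρ(r) = F(r)/r` is the slope `dslope F 0`, which is analytic at `0`
with `n`-th derivative `F⁽ⁿ⁺¹⁾(0)/(n+1)`. For `n = 2m+1` this is a multiple of the moment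
`∑ C_i (μ_i²)^(m+2)`, which vanishes for `m + 2 < N` and not for `m + 2 = N`.
-/

open Polynomial Finset

section LagrangeWeights

variable {F ι : Type*} [Field F] [Fintype ι] [DecidableEq ι]

def lagrangeWeight (v : ι → F) (i : ι) : F :=
  ∏ j ∈ univ.erase i, v j / (v j - v i)

variable {v : ι → F}

theorem eval_zero_lagrangeBasis (hv : Function.Injective v) (i : ι) :
    (Lagrange.basis univ v i).eval 0 = lagrangeWeight v i := by
  rw [Lagrange.basis, eval_prod]
  refine prod_congr rfl fun j hj => ?_
  have hij : v i - v j ≠ 0 := sub_ne_zero.2 fun h => (mem_erase.1 hj).1 (hv h).symm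
  have hji : v j - v i ≠ 0 := by rwa [← neg_sub, neg_ne_zero]
  simp only [Lagrange.basisDivisor, eval_mul, eval_C, eval_sub, eval_X]
  field_simp
  ring

theorem eval_zero_eq_sum_lagrangeWeight_mul (hv : Function.Injective v) {p : F[X]}
    (hp : p.degree < Fintype.card ι) :
    p.eval 0 = ∑ i, lagrangeWeight v i * p.eval (v i) := by
  conv_lhs => rw [Lagrange.eq_interpolate hv.injOn hp]
  simp [Lagrange.interpolate_apply, eval_finsetSum, eval_zero_lagrangeBasis hv, mul_comm]

theorem sum_lagrangeWeight_mul_pow_eq_zero (hv : Function.Injective v) {n : ℕ}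
    (hn₀ : n ≠ 0) (hn : n < Fintype.card ι) :
    ∑ i, lagrangeWeight v i * v i ^ n = 0 := by
  have hdeg : (X ^ n : F[X]).degree < Fintype.card ι := by
    rw [degree_X_pow]
    exact_mod_cast hn
  simpa [zero_pow hn₀] using (eval_zero_eq_sum_lagrangeWeight_mul hv hdeg).symm

theorem sum_lagrangeWeight_mul_pow_card [Nonempty ι] (hv : Function.Injective v) :
    ∑ i, lagrangeWeight v i * v i ^ Fintype.card ι = (-1) ^ (Fintype.card ι + 1) * ∏ i, v i := by
  set N := Fintype.card ι
  set p : F[X] := X ^ N - Lagrange.nodal univ v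
  have hdeg : p.degree < N := by
    have hX : (X ^ N : F[X]).degree = N := degree_X_pow N
    rw [← hX]
    exact degree_sub_lt_left (by rw [hX, Lagrange.degree_nodal, card_univ])
      (pow_ne_zero N X_ne_zero) (by rw [leadingCoeff_X_pow, Lagrange.nodal_monic.leadingCoeff])
  have hnode : ∀ i, p.eval (v i) = v i ^ N := fun i => by
    simp [p, Lagrange.eval_nodal_at_node (mem_univ i)]
  have hzero : p.eval 0 = (-1) ^ (N + 1) * ∏ i, v i := by
    simp [p, N, Lagrange.eval_nodal, prod_neg, pow_succ]
  rw [← hzero, eval_zero_eq_sum_lagrangeWeight_mul hv hdeg]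
  simp_rw [hnode]

end LagrangeWeights

theorem AnalyticAt.iteratedDeriv_dslope {𝕜 : Type*} [NontriviallyNormedField 𝕜] [CompleteSpace 𝕜]
    [CharZero 𝕜] {f : 𝕜 → 𝕜} {x : 𝕜} (hf : AnalyticAt 𝕜 f x) (n : ℕ) :
    iteratedDeriv n (dslope f x) x = iteratedDeriv (n + 1) f x / (n + 1) := by
  have hslope := hf.hasFPowerSeriesAt.has_fpower_series_dslope_fslope
  have hcoeff := congrArg (·.coeff n)
    (hslope.analyticAt.hasFPowerSeriesAt.eq_formalMultilinearSeries hslope)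
  simp only [FormalMultilinearSeries.coeff_fslope, FormalMultilinearSeries.coeff_ofScalars,
    Nat.factorial_succ, Nat.cast_mul] at hcoeff
  have : (n.factorial : 𝕜) ≠ 0 := Nat.cast_ne_zero.2 n.factorial_ne_zero
  field_simp at hcoeff
  rw [← hcoeff]
  push_cast
  field_simp

theorem iteratedDeriv_sum_mul_cexp {ι : Type*} (s : Finset ι) (a c : ι → ℂ) (n : ℕ) :
    iteratedDeriv n (fun z => ∑ i ∈ s, a i * Complex.exp (c i * z))
      = fun z => ∑ i ∈ s, a i * c i ^ n * Complex.exp (c i * z) := by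
  funext z
  rw [iteratedDeriv_fun_sum (fun i _ => by fun_prop)]
  refine sum_congr rfl fun i _ => ?_
  rw [iteratedDeriv_const_mul _ (by fun_prop), iteratedDeriv_cexp_const_mul, mul_assoc]

theorem iteratedDeriv_dslope_sum_mul_cexp {ι : Type*} (s : Finset ι) (a c : ι → ℂ) (n : ℕ) :
    iteratedDeriv n (dslope (fun z => ∑ i ∈ s, a i * Complex.exp (c i * z)) 0) 0
      = (∑ i ∈ s, a i * c i ^ (n + 1)) / (n + 1) := by
  have hf : AnalyticAt ℂ (fun z => ∑ i ∈ s, a i * Complex.exp (c i * z)) 0 := by fun_prop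
  simp [hf.iteratedDeriv_dslope, iteratedDeriv_sum_mul_cexp]

theorem stmt9_general (N : ℕ) (hN : 2 ≤ N) (μ : Fin N → ℂ)
    (hinj : Function.Injective fun i => μ i ^ 2)
    (hne : ∀ i, μ i ≠ 0)
    (C : Fin N → ℂ)
    (hC : ∀ i, C i = ∏ j ∈ Finset.univ.erase i, μ j ^ 2 / (μ j ^ 2 - μ i ^ 2)) :
    ∃ g : ℂ → ℂ, AnalyticAt ℂ g 0 ∧
      (∀ r : ℝ, 0 < r →
        g r = 1 / (4 * (Real.pi : ℂ) * r) * ∑ i, C i * μ i ^ 2 * Complex.exp (-(μ i * r))) ∧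
      (∀ m : ℕ, 2 * m + 1 ≤ 2 * N - 5 → iteratedDeriv (2 * m + 1) g 0 = 0) ∧
      iteratedDeriv (2 * N - 3) g 0 ≠ 0 := by
  have hCv : C = lagrangeWeight fun i => μ i ^ 2 := funext hC
  have hmoment : ∀ k, k ≠ 0 → k < N → ∑ i, C i * (μ i ^ 2) ^ k = 0 := fun k hk hkN => by
    rw [hCv]
    exact sum_lagrangeWeight_mul_pow_eq_zero hinj hk (by simpa using hkN)
  have hπ : (Real.pi : ℂ) ≠ 0 := Complex.ofReal_ne_zero.2 Real.pi_ne_zero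
  set F : ℂ → ℂ := fun z => ∑ i, C i * μ i ^ 2 / (4 * Real.pi) * Complex.exp (-μ i * z)
  have hderiv : ∀ k, iteratedDeriv (2 * k + 1) (dslope F 0) 0
      = (∑ i, C i * (μ i ^ 2) ^ (k + 2)) / (4 * Real.pi * (2 * k + 2)) := fun k => by
    rw [iteratedDeriv_dslope_sum_mul_cexp, sum_div, sum_div]
    refine sum_congr rfl fun i _ => ?_
    have hk : (2 * k + 1 + 1 : ℂ) ≠ 0 := by norm_cast
    rw [show 2 * k + 1 + 1 = 2 * (k + 1) by ring, pow_mul, neg_sq]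
    push_cast
    field_simp
    ring
  have hF : AnalyticAt ℂ F 0 := by fun_prop
  refine ⟨dslope F 0, hF.hasFPowerSeriesAt.has_fpower_series_dslope_fslope.analyticAt,
    fun r hr => ?_, fun m hm => ?_, ?_⟩
  · have hr0 : (r : ℂ) ≠ 0 := Complex.ofReal_ne_zero.2 hr.ne'
    have hF0 : F 0 = 0 := by
      simpa [F, ← sum_div] using hmoment 1 one_ne_zero hN
    rw [dslope_of_ne _ hr0, slope_def_field, hF0, sub_zero, sub_zero, mul_sum, sum_div]
    refine sum_congr rfl fun i _ => ?_
    rw [neg_mul]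
    field_simp
  · rw [hderiv, hmoment (m + 2) (by omega) (by omega), zero_div]
  · obtain ⟨k, rfl⟩ : ∃ k, N = k + 2 := ⟨N - 2, by omega⟩
    have htop := sum_lagrangeWeight_mul_pow_card hinj
    rw [Fintype.card_fin, ← hCv] at htop
    rw [show 2 * (k + 2) - 3 = 2 * k + 1 by omega, hderiv, htop]
    refine div_ne_zero (mul_ne_zero (pow_ne_zero _ (neg_ne_zero.2 one_ne_zero)) ?_)
      (by norm_cast; positivity)
    exact prod_ne_zero_iff.2 fun i _ => pow_ne_zero 2 (hne i)

/-- The effective source `ρ(r) = (1/(4πr))·∑ C_i μ_i² e^{-μ_i r}` of polynomial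
higher-derivative gravity with `N ≥ 2` distinct simple poles `μ_i²` (each `μ_i` with
positive real part) extends analytically to `r = 0`, with vanishing Taylor
coefficients at the odd orders `1, 3, …, 2N-5` and a nonzero coefficient at order
`2N-3`; i.e. `ρ` is `(N-2)`-regular but not `(N-1)`-regular. -/
theorem stmt9 (N : ℕ) (hN : 2 ≤ N) (μ : Fin N → ℂ)
    (hinj : Function.Injective fun i => μ i ^ 2)
    (hne : ∀ i, μ i ≠ 0)
    (hre : ∀ i, 0 < (μ i).re)
    (C : Fin N → ℂ)
    (hC : ∀ i, C i = ∏ j ∈ Finset.univ.erase i, μ j ^ 2 / (μ j ^ 2 - μ i ^ 2)) :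
    ∃ g : ℂ → ℂ, AnalyticAt ℂ g 0 ∧
      (∀ r : ℝ, 0 < r →
        g r = 1 / (4 * (Real.pi : ℂ) * r) * ∑ i, C i * μ i ^ 2 * Complex.exp (-(μ i * r))) ∧
      (∀ m : ℕ, 2 * m + 1 ≤ 2 * N - 5 → iteratedDeriv (2 * m + 1) g 0 = 0) ∧
      iteratedDeriv (2 * N - 3) g 0 ≠ 0 :=
  stmt9_general N hN μ hinj hne C hC
end

section
/- Let μ₁², …, μ_N² be N ≥ 1 distinct nonzero complex numbers with C_i = ∏_{j≠i} μ_j²/(μ_j² - μ_i²). Then the potential χ(r) = -(GM/r)·(1 - ∑_{i=1}^N C_i·e^{-μ_i r}) extends continuously to r = 0 (no 1/r singularity), since ∑_{i=1}^N C_i = 1. -/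
theorem lagrange_sum_eq_one (N : ℕ) (hN : 1 ≤ N) (v : Fin N → ℂ)
    (hinj : Function.Injective v) :
    ∑ i, ∏ j ∈ Finset.univ.erase i, v j / (v j - v i) = 1 := by
  have hs : (Finset.univ : Finset (Fin N)).Nonempty := ⟨⟨0, hN⟩, Finset.mem_univ _⟩
  have h := Lagrange.sum_basis (s := Finset.univ) (v := v) hinj.injOn hs
  have h0 := congrArg (Polynomial.eval 0) h
  rw [Polynomial.eval_finset_sum] at h0
  simp only [Polynomial.eval_one] at h0
  rw [← h0]
  apply Finset.sum_congr rfl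
  intro i _
  rw [Lagrange.basis, Polynomial.eval_prod]
  apply Finset.prod_congr rfl
  intro j hj
  have hij : v i ≠ v j := fun h => (Finset.ne_of_mem_erase hj) (hinj h).symm
  rw [Lagrange.basisDivisor]
  simp only [Polynomial.eval_mul, Polynomial.eval_C, Polynomial.eval_sub, Polynomial.eval_X]
  rw [zero_sub, div_eq_mul_inv, show v i - v j = -(v j - v i) by ring, inv_neg]
  ring

theorem diff_quot_tendsto (c : ℂ) :
    Filter.Tendsto (fun r : ℝ => (1 - Complex.exp (-(c * r))) / r)
      (nhdsWithin 0 (Set.Ioi 0)) (nhds c) := by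
  have hd : HasDerivAt (fun r : ℝ => Complex.exp (-(c * r))) (-c) 0 := by
    have h1 : HasDerivAt (fun r : ℝ => -(c * (r : ℂ))) (-(c * 1)) 0 :=
      ((Complex.ofRealCLM.hasDerivAt).const_mul c).neg
    simpa using h1.cexp
  have hneg := (hasDerivAt_iff_tendsto_slope.mp hd).neg
  rw [neg_neg] at hneg
  have heq : ∀ r : ℝ, -(slope (fun r : ℝ => Complex.exp (-(c * r))) 0 r)
      = (1 - Complex.exp (-(c * r))) / r := by
    intro r
    simp only [slope, vsub_eq_sub, sub_zero, Complex.real_smul, Complex.ofReal_inv,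
      Complex.ofReal_zero, mul_zero, neg_zero, Complex.exp_zero]
    rw [div_eq_inv_mul]
    ring
  have h2 : Filter.Tendsto (fun r : ℝ => (1 - Complex.exp (-(c * r))) / r)
      (nhdsWithin 0 {(0:ℝ)}ᶜ) (nhds c) := hneg.congr heq
  exact h2.mono_left (nhdsWithin_mono _ (fun x hx => ne_of_gt hx))

/-- The Newtonian potential `χ(r) = -(GM/r)(1 - ∑ C_i e^{-μ_i r})` of polynomial
higher-derivative gravity with `N ≥ 1` distinct nonzero simple poles `μ_i²` extends
continuously to `r = 0` (no `1/r` singularity), since `∑ C_i = 1`. -/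
theorem stmt10 (N : ℕ) (hN : 1 ≤ N) (G M : ℝ) (hG : 0 < G) (hM : 0 < M)
    (μ : Fin N → ℂ)
    (hinj : Function.Injective fun i => μ i ^ 2)
    (hne : ∀ i, μ i ≠ 0)
    (C : Fin N → ℂ)
    (hC : ∀ i, C i = ∏ j ∈ Finset.univ.erase i, μ j ^ 2 / (μ j ^ 2 - μ i ^ 2))
    (χ : ℝ → ℂ)
    (hχ : ∀ r : ℝ, χ r = -((G * M / r : ℝ) : ℂ) * (1 - ∑ i, C i * Complex.exp (-(μ i * r)))) :
    (∑ i, C i = 1) ∧ ∃ L : ℂ, Filter.Tendsto χ (nhdsWithin 0 (Set.Ioi 0)) (nhds L) := by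
  have hsum : ∑ i, C i = 1 := by
    have := lagrange_sum_eq_one N hN (fun i => μ i ^ 2) hinj
    rw [← this]
    exact Finset.sum_congr rfl fun i _ => hC i
  refine ⟨hsum, -(G * M : ℂ) * ∑ i, C i * μ i, ?_⟩
  have htend : Filter.Tendsto
      (fun r : ℝ => -(G * M : ℂ) * ∑ i, C i * ((1 - Complex.exp (-(μ i * r))) / r))
      (nhdsWithin 0 (Set.Ioi 0)) (nhds (-(G * M : ℂ) * ∑ i, C i * μ i)) := by
    exact Filter.Tendsto.const_mul _ (tendsto_finset_sum _ fun i _ =>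
      (diff_quot_tendsto (μ i)).const_mul _)
  refine htend.congr' ?_ |>.congr fun r => rfl
  filter_upwards [self_mem_nhdsWithin] with r hr
  have hr0 : (r : ℂ) ≠ 0 := Complex.ofReal_ne_zero.mpr (ne_of_gt hr)
  rw [hχ r]
  rw [show (1:ℂ) - ∑ i, C i * Complex.exp (-(μ i * r))
      = ∑ i, C i * (1 - Complex.exp (-(μ i * r))) by
    simp only [mul_sub, mul_one]; rw [Finset.sum_sub_distrib, hsum]]
  rw [Finset.mul_sum, Finset.mul_sum]
  refine (Finset.sum_congr rfl fun i _ => ?_).symm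
  push_cast
  field_simp
end

section
/- If ξ : [0,∞) → ℝ is a continuous N-regular function (i.e. 2N-times continuously differentiable with its first N odd-order derivatives vanishing at 0), and χ(r) = -∫_∞^r g(x) dx with g(x) = -(G/x²)·4π∫₀^x t²ξ(t) dt, assuming these integrals converge, then χ is (N+1)-regular. -/
/-!
With the mean `A_j φ (x) = ∫₀¹ s^j φ(s x) ds` one has `m(x) = 4π x³ A₂ξ(x)`, so on `[0, ∞)`
`χ' = -g = 4πG x A₂ξ(x)` and `χ'' = 4πG (ξ - 2 A₂ξ)`. Integration by parts gives
`(A_j φ)' = A_{j+1} φ'`, so `A_j` preserves `C^k` on `[0, ∞)` and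
`(A_j φ)^{(k)}(0) = φ^{(k)}(0) / (j + k + 1)`. Hence `χ` is `C^{2N+2}`, and
`χ^{(2n+1)}(0) = 4πG · 2n/(2n+2) · ξ^{(2n-1)}(0) = 0`.
-/

open Set MeasureTheory Filter

section CalculusOnSet

variable {s : Set ℝ} {f f' : ℝ → ℝ}

theorem contDiffOn_succ_of_hasDerivWithinAt (hs : UniqueDiffOn ℝ s)
    (hf : ∀ x ∈ s, HasDerivWithinAt f (f' x) s x) {n : ℕ} (hf' : ContDiffOn ℝ n f' s) :
    ContDiffOn ℝ (n + 1 : ℕ) f s := by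
  rw [Nat.cast_succ, contDiffOn_succ_iff_derivWithin hs]
  exact ⟨fun x hx => (hf x hx).differentiableWithinAt, fun h => absurd h (by simp),
    hf'.congr fun x hx => (hf x hx).derivWithin (hs x hx)⟩

theorem iteratedDerivWithin_succ_of_hasDerivWithinAt (hs : UniqueDiffOn ℝ s)
    (hf : ∀ x ∈ s, HasDerivWithinAt f (f' x) s x) (n : ℕ) {x : ℝ} (hx : x ∈ s) :
    iteratedDerivWithin (n + 1) f s x = iteratedDerivWithin n f' s x := by
  rw [iteratedDerivWithin_succ']
  exact iteratedDerivWithin_congr (fun y hy => (hf y hy).derivWithin (hs y hy)) hx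

end CalculusOnSet

lemma continuous_comp_max_zero {φ : ℝ → ℝ} (hφ : ContinuousOn φ (Ici 0)) :
    Continuous (fun t => φ (max t 0)) :=
  hφ.comp_continuous (continuous_id.max continuous_const) fun _ => mem_Ici.2 (le_max_right _ _)

/-- `∫₀¹ s^j φ(s x) ds`, i.e. `x^{-(j+1)} ∫₀ˣ t^j φ(t) dt` written so that its smoothness at `0` is
visible. The `max` makes it depend only on `φ` restricted to `[0, ∞)`. -/
noncomputable def radialMean (j : ℕ) (φ : ℝ → ℝ) (x : ℝ) : ℝ :=
  ∫ s in (0:ℝ)..1, s ^ j * φ (max (s * x) 0)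

namespace radialMean

variable {φ : ℝ → ℝ}

lemma continuous (hφ : ContinuousOn φ (Ici 0)) (j : ℕ) : Continuous (radialMean j φ) :=
  intervalIntegral.continuous_parametric_intervalIntegral_of_continuous'
    ((continuous_snd.pow j).mul
      ((continuous_comp_max_zero hφ).comp (continuous_snd.mul continuous_fst))) 0 1

lemma apply_zero (j : ℕ) (φ : ℝ → ℝ) : radialMean j φ 0 = φ 0 / (j + 1) := by
  simp only [radialMean, mul_zero, max_self]
  rw [intervalIntegral.integral_mul_const, integral_pow]
  simp [zero_pow (Nat.succ_ne_zero j), div_eq_inv_mul]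

lemma pow_succ_mul (φ : ℝ → ℝ) (j : ℕ) (x : ℝ) :
    x ^ (j + 1) * radialMean j φ x = ∫ t in (0:ℝ)..x, t ^ j * φ (max t 0) := by
  have h := intervalIntegral.smul_integral_comp_mul_left (a := 0) (b := 1)
    (fun t => t ^ j * φ (max t 0)) x
  simp only [mul_zero, mul_one, smul_eq_mul] at h
  rw [← h, radialMean, pow_succ', mul_assoc, ← intervalIntegral.integral_const_mul]
  congr 1
  refine intervalIntegral.integral_congr fun s _ => ?_
  simp only [mul_pow, mul_comm x s]
  ring

/-- At `0` this is the limit of the difference quotient `radialMean j φ y`; for `x > 0` write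
`y * radialMean j φ y = (∫₀ʸ t ^ j φ t) / y ^ j`. -/
lemma hasDerivWithinAt_mul (hφ : ContinuousOn φ (Ici 0)) (j : ℕ) {x : ℝ} (hx : 0 ≤ x) :
    HasDerivWithinAt (fun y => y * radialMean j φ y) (φ x - j * radialMean j φ x) (Ici 0) x := by
  rcases hx.eq_or_lt with rfl | hpos
  · have hval : φ 0 - j * radialMean j φ 0 = radialMean j φ 0 := by
      rw [apply_zero]
      field_simp
      ring
    rw [hval, hasDerivWithinAt_iff_tendsto_slope]
    refine Tendsto.congr' ?_ (((continuous hφ j).tendsto 0).mono_left nhdsWithin_le_nhds)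
    filter_upwards [self_mem_nhdsWithin] with y hy
    have hy0 : y ≠ 0 := fun h => hy.2 (by simp [h])
    rw [slope_def_field]
    field_simp
    ring
  · set F : ℝ → ℝ := fun y => ∫ t in (0:ℝ)..y, t ^ j * φ (max t 0)
    have hF : HasDerivAt F (x ^ j * φ (max x 0)) x :=
      (((continuous_pow j).mul (continuous_comp_max_zero hφ)).integral_hasStrictDerivAt
        0 x).hasDerivAt
    have hq := hF.div (hasDerivAt_pow j x) (pow_ne_zero j hpos.ne')
    have heq : (fun y => y * radialMean j φ y) =ᶠ[nhds x] fun y => F y / y ^ j := by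
      filter_upwards [eventually_gt_nhds hpos] with y hy
      simp only [F, ← pow_succ_mul, pow_succ]
      field_simp [pow_ne_zero j hy.ne']
    refine HasDerivWithinAt.congr_deriv (hq.congr_of_eventuallyEq heq).hasDerivWithinAt ?_
    simp only [F, ← pow_succ_mul, max_eq_left hx]
    rcases j with _ | i
    · simp
    · simp only [Nat.add_sub_cancel]
      field_simp
      push_cast
      ring

lemma continuous_integrand (hφ : ContinuousOn φ (Ici 0)) (j : ℕ) (x : ℝ) :
    Continuous fun s : ℝ => s ^ j * φ (max (s * x) 0) :=
  (continuous_pow j).mul ((continuous_comp_max_zero hφ).comp (continuous_mul_const x))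

/-- Integration by parts, performed in the variable `s ∈ [0, 1]` of the mean. -/
lemma succ_mul_add_mul_succ_derivWithin (hφ : ContDiffOn ℝ 1 φ (Ici 0)) (j : ℕ) {x : ℝ}
    (hx : 0 ≤ x) :
    (j + 1) * radialMean j φ x + x * radialMean (j + 1) (derivWithin φ (Ici 0)) x = φ x := by
  set φ' := derivWithin φ (Ici 0)
  have hφc := hφ.continuousOn
  have hφ'c : ContinuousOn φ' (Ici 0) :=
    (hφ.derivWithin (m := 0) (uniqueDiffOn_Ici 0) le_rfl).continuousOn
  rcases hx.eq_or_lt with rfl | hpos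
  · rw [apply_zero, zero_mul, add_zero]
    field_simp
  have hderiv : ∀ s ∈ Ioo (0:ℝ) 1, HasDerivAt (fun s => s ^ (j + 1) * φ (max (s * x) 0))
      ((j + 1) * (s ^ j * φ (max (s * x) 0)) + x * (s ^ (j + 1) * φ' (max (s * x) 0))) s := by
    intro s hs
    have hsx : 0 < s * x := mul_pos hs.1 hpos
    have hφx : HasDerivAt φ (φ' (s * x)) (s * x) :=
      ((hφ.differentiableOn one_ne_zero (s * x) hsx.le).hasDerivWithinAt).hasDerivAt
        (Ici_mem_nhds hsx)
    have hmax : (fun s => s ^ (j + 1) * φ (max (s * x) 0)) =ᶠ[nhds s]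
        fun s => s ^ (j + 1) * φ (s * x) := by
      filter_upwards [(continuous_mul_const x).continuousAt.eventually (lt_mem_nhds hsx)]
        with t ht
      rw [max_eq_left ht.le]
    refine (((hasDerivAt_pow (j + 1) s).mul
      (hφx.comp s (hasDerivAt_mul_const x))).congr_of_eventuallyEq hmax).congr_deriv ?_
    simp only [Function.comp_apply, max_eq_left hsx.le]
    push_cast
    ring
  have h₁ := (continuous_integrand hφc j x).const_mul ((j : ℝ) + 1)
  have h₂ := (continuous_integrand hφ'c (j + 1) x).const_mul x
  have key := intervalIntegral.integral_eq_sub_of_hasDerivAt_of_le zero_le_one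
    (continuous_integrand hφc (j + 1) x).continuousOn hderiv ((h₁.add h₂).intervalIntegrable 0 1)
  rw [intervalIntegral.integral_add (h₁.intervalIntegrable 0 1) (h₂.intervalIntegrable 0 1),
    intervalIntegral.integral_const_mul, intervalIntegral.integral_const_mul] at key
  simpa [radialMean, max_eq_left hx] using key

/-- Solve the integration by parts identity for `radialMean j φ` and differentiate the right-hand
side with `hasDerivWithinAt_mul`. -/
lemma hasDerivWithinAt (hφ : ContDiffOn ℝ 1 φ (Ici 0)) (j : ℕ) {x : ℝ} (hx : x ∈ Ici 0) :
    HasDerivWithinAt (radialMean j φ) (radialMean (j + 1) (derivWithin φ (Ici 0)) x) (Ici 0) x := by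
  set φ' := derivWithin φ (Ici 0)
  have hφ'c : ContinuousOn φ' (Ici 0) :=
    (hφ.derivWithin (m := 0) (uniqueDiffOn_Ici 0) le_rfl).continuousOn
  have hj : (j : ℝ) + 1 ≠ 0 := by positivity
  have heq : EqOn (radialMean j φ) (fun y => (φ y - y * radialMean (j + 1) φ' y) / (j + 1))
      (Ici 0) := fun y hy => by
    dsimp only
    rw [← succ_mul_add_mul_succ_derivWithin hφ j hy]
    field_simp
    ring
  have hd := ((hφ.differentiableOn one_ne_zero x hx).hasDerivWithinAt.sub
    (hasDerivWithinAt_mul hφ'c (j + 1) hx)).div_const ((j : ℝ) + 1)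
  refine (hd.congr heq (heq hx)).congr_deriv ?_
  push_cast
  field_simp
  ring

lemma contDiffOn {k : ℕ} (hφ : ContDiffOn ℝ k φ (Ici 0)) (j : ℕ) :
    ContDiffOn ℝ k (radialMean j φ) (Ici 0) := by
  induction k generalizing φ j with
  | zero =>
    rw [Nat.cast_zero, contDiffOn_zero] at hφ ⊢
    exact (continuous hφ j).continuousOn
  | succ k ih =>
    have hφ1 : ContDiffOn ℝ 1 φ (Ici 0) := hφ.of_le (by exact_mod_cast k.succ_pos)
    refine contDiffOn_succ_of_hasDerivWithinAt (uniqueDiffOn_Ici 0)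
      (fun x hx => hasDerivWithinAt hφ1 j hx) (ih ?_ (j + 1))
    exact hφ.derivWithin (uniqueDiffOn_Ici 0) (by push_cast; rfl)

lemma iteratedDerivWithin_eq {k : ℕ} (hφ : ContDiffOn ℝ k φ (Ici 0)) (j : ℕ) {x : ℝ}
    (hx : x ∈ Ici 0) :
    iteratedDerivWithin k (radialMean j φ) (Ici 0) x
      = radialMean (j + k) (iteratedDerivWithin k φ (Ici 0)) x := by
  induction k generalizing φ j with
  | zero => simp
  | succ k ih =>
    have hφ1 : ContDiffOn ℝ 1 φ (Ici 0) := hφ.of_le (by exact_mod_cast k.succ_pos)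
    rw [iteratedDerivWithin_succ_of_hasDerivWithinAt (uniqueDiffOn_Ici 0)
      (fun x hx => hasDerivWithinAt hφ1 j hx) k hx,
      ih (hφ.derivWithin (uniqueDiffOn_Ici 0) (by push_cast; rfl)) (j + 1),
      iteratedDerivWithin_succ', add_right_comm, add_assoc]

lemma iteratedDerivWithin_mul_zero {k : ℕ} (hφ : ContDiffOn ℝ k φ (Ici 0)) (j : ℕ) :
    iteratedDerivWithin (k + 1) (fun y => y * radialMean j φ y) (Ici 0) 0
      = (k + 1) / (j + k + 1) * iteratedDerivWithin k φ (Ici 0) 0 := by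
  have h0 : (0:ℝ) ∈ Ici 0 := self_mem_Ici
  rw [iteratedDerivWithin_succ_of_hasDerivWithinAt (uniqueDiffOn_Ici 0)
    (fun x hx => hasDerivWithinAt_mul hφ.continuousOn j hx) k h0,
    ← Pi.sub_def, iteratedDerivWithin_sub h0 (uniqueDiffOn_Ici 0) (hφ 0 h0)
      ((contDiffOn_const.mul (contDiffOn hφ j)) 0 h0),
    iteratedDerivWithin_const_mul_field, iteratedDerivWithin_eq hφ j h0, apply_zero]
  field_simp
  push_cast
  ring

end radialMean

lemma hasDerivWithinAt_integral_Ioi {g h : ℝ → ℝ} (hg : IntegrableOn g (Ioi 0))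
    (hgh : EqOn g h (Ici 0)) (hh : Continuous h) {x : ℝ} (hx : x ∈ Ici 0) :
    HasDerivWithinAt (fun r => ∫ t in Ioi r, g t) (-h x) (Ici 0) x := by
  have heq : EqOn (fun r => ∫ t in Ioi r, g t)
      (fun r => (∫ t in Ioi 0, g t) - ∫ t in (0:ℝ)..r, h t) (Ici 0) := fun r hr => by
    have hgh' : ∫ t in (0:ℝ)..r, g t = ∫ t in (0:ℝ)..r, h t :=
      intervalIntegral.integral_congr fun t ht => hgh (by rw [uIcc_of_le hr] at ht; exact ht.1)
    dsimp only
    rw [← hgh', ← intervalIntegral.integral_Ioi_sub_Ioi hg hr, sub_sub_cancel]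
  exact ((hh.integral_hasStrictDerivAt 0 x).hasDerivAt.const_sub _).hasDerivWithinAt.congr heq
    (heq hx)

theorem stmt12_general (N : ℕ) (G : ℝ) (ξ m g χ : ℝ → ℝ)
    (hξd : ContDiffOn ℝ (2 * N : ℕ) ξ (Set.Ici 0))
    (hξodd : ∀ n < N, iteratedDerivWithin (2 * n + 1) ξ (Set.Ici 0) 0 = 0)
    (hm : ∀ x, m x = 4 * Real.pi * ∫ t in (0:ℝ)..x, t ^ 2 * ξ t)
    (hg : ∀ x, g x = -(G * m x / x ^ 2))
    (hgint : MeasureTheory.IntegrableOn g (Set.Ioi 0))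
    (hχ : ∀ r, χ r = ∫ x in Set.Ioi r, g x) :
    ContDiffOn ℝ (2 * (N + 1) : ℕ) χ (Set.Ici 0) ∧
    ∀ n ≤ N, iteratedDerivWithin (2 * n + 1) χ (Set.Ici 0) 0 = 0 := by
  set f := fun x => x * radialMean 2 ξ x
  have hgf : EqOn g (fun x => -(4 * Real.pi * G * f x)) (Ici 0) := fun x hx => by
    have hmass : ∫ t in (0:ℝ)..x, t ^ 2 * ξ t = x ^ 3 * radialMean 2 ξ x := by
      rw [radialMean.pow_succ_mul]
      refine intervalIntegral.integral_congr fun t ht => ?_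
      rw [uIcc_of_le hx] at ht
      simp only [max_eq_left ht.1]
    rcases (mem_Ici.1 hx).eq_or_lt with rfl | hpos
    · simp [hg, f]
    · simp only [hg, hm, hmass, f]
      field_simp
  have hχ' : ∀ x ∈ Ici 0, HasDerivWithinAt χ (4 * Real.pi * G * f x) (Ici 0) x := fun x hx => by
    rw [funext hχ, ← neg_neg (4 * Real.pi * G * f x)]
    exact hasDerivWithinAt_integral_Ioi hgint hgf
      ((continuous_id.mul (radialMean.continuous hξd.continuousOn 2)).const_mul _).neg hx
  have hf : ContDiffOn ℝ (2 * N + 1 : ℕ) f (Ici 0) :=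
    contDiffOn_succ_of_hasDerivWithinAt (uniqueDiffOn_Ici 0)
      (fun x hx => radialMean.hasDerivWithinAt_mul hξd.continuousOn 2 hx)
      (hξd.sub (contDiffOn_const.mul (radialMean.contDiffOn hξd 2)))
  refine ⟨contDiffOn_succ_of_hasDerivWithinAt (uniqueDiffOn_Ici 0) hχ'
    (contDiffOn_const.mul hf), fun n hn => ?_⟩
  rw [iteratedDerivWithin_succ_of_hasDerivWithinAt (uniqueDiffOn_Ici 0) hχ' _ self_mem_Ici,
    iteratedDerivWithin_const_mul_field]
  rcases n with _ | k
  · simp [f]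
  · rw [show 2 * (k + 1) = 2 * k + 1 + 1 by ring,
      radialMean.iteratedDerivWithin_mul_zero (hξd.of_le (by exact_mod_cast (by omega))),
      hξodd k (by omega), mul_zero, mul_zero]

/-- If the effective source `ξ` is continuous and `N`-regular on `[0,∞)` (i.e. `2N`-times
continuously differentiable with its first `N` odd-order derivatives vanishing at `0`),
then the Newtonian potential `χ(r) = -∫_∞^r g(x) dx`, where `g(x) = -G·m(x)/x²` and
`m(x) = 4π∫₀^x t²ξ(t) dt`, is `(N+1)`-regular, assuming the integrals converge. -/
theorem stmt12 (N : ℕ) (G : ℝ) (hG : 0 < G) (ξ m g χ : ℝ → ℝ)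
    (hξc : ContinuousOn ξ (Set.Ici 0))
    (hξd : ContDiffOn ℝ (2 * N : ℕ) ξ (Set.Ici 0))
    (hξodd : ∀ n < N, iteratedDerivWithin (2 * n + 1) ξ (Set.Ici 0) 0 = 0)
    (hm : ∀ x, m x = 4 * Real.pi * ∫ t in (0:ℝ)..x, t ^ 2 * ξ t)
    (hg : ∀ x, g x = -(G * m x / x ^ 2))
    (hgint : MeasureTheory.IntegrableOn g (Set.Ioi 0))
    (hχ : ∀ r, χ r = ∫ x in Set.Ioi r, g x) :
    ContDiffOn ℝ (2 * (N + 1) : ℕ) χ (Set.Ici 0) ∧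
    ∀ n ≤ N, iteratedDerivWithin (2 * n + 1) χ (Set.Ici 0) 0 = 0 :=
  stmt12_general N G ξ m g χ hξd hξodd hm hg hgint hχ
end

section
/- Suppose ρ(r) = (M/(2π²))·∫₀^∞ k·sin(kr)/(r·f(-k²)) dk where f is continuous, f(-k²) > 0 for all real k, f(0) = 1, and there are k₀, c > 0 with f(-k²) ≥ c·k⁴ for k > k₀. Then ρ is continuous and bounded on [0,∞), and ρ attains its maximum at r = 0 with ρ(0) = (M/(2π²))·∫₀^∞ k²/f(-k²) dk > 0. -/
open MeasureTheory Real Set Filter Topology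

noncomputable def mySinc (x : ℝ) : ℝ := if x = 0 then 1 else Real.sin x / x

lemma mySinc_zero : mySinc 0 = 1 := if_pos rfl

lemma mySinc_ne (x : ℝ) (hx : x ≠ 0) : mySinc x = Real.sin x / x := if_neg hx

lemma abs_mySinc_le_one (x : ℝ) : |mySinc x| ≤ 1 := by
  rcases eq_or_ne x 0 with h | h
  · simp [mySinc, h]
  · rw [mySinc_ne x h, abs_div]
    rw [div_le_one (abs_pos.mpr h)]
    exact Real.abs_sin_le_abs

lemma mySinc_continuous : Continuous mySinc := by
  rw [continuous_iff_continuousAt]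
  intro x
  rcases eq_or_ne x 0 with rfl | hx
  · have h1 : Tendsto (fun y : ℝ => Real.sin y / y) (𝓝[≠] 0) (𝓝 1) := by
      have := (Real.hasDerivAt_sin 0)
      rw [hasDerivAt_iff_tendsto_slope] at this
      simpa [slope_fun_def_field, Real.cos_zero] using this
    have h2 : Tendsto mySinc (𝓝[≠] 0) (𝓝 1) := by
      refine h1.congr' ?_
      filter_upwards [self_mem_nhdsWithin] with y hy
      exact (mySinc_ne y hy).symm
    have h3 : Tendsto mySinc (pure (0:ℝ)) (𝓝 1) := by
      simpa [mySinc_zero] using tendsto_pure_nhds mySinc (0:ℝ)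
    have : Tendsto mySinc (𝓝 (0:ℝ)) (𝓝 1) := by
      rw [← nhdsNE_sup_pure (0:ℝ)]
      exact Tendsto.sup h2 h3
    simpa [ContinuousAt, mySinc_zero] using this
  · have hcont : ContinuousAt (fun y : ℝ => Real.sin y / y) x :=
      (Real.continuous_sin.continuousAt).div continuousAt_id hx
    refine hcont.congr ?_
    filter_upwards [isOpen_ne.mem_nhds hx] with y hy
    exact (mySinc_ne y hy).symm

/-- Regularization of the source: if the form factor satisfies `f(-k²) > 0`, `f(0) = 1`
and `f(-k²) ≥ c·k⁴` for large `k`, then the effective delta source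
`ρ(r) = (M/(2π²))∫₀^∞ k sin(kr)/(r f(-k²)) dk` (with the integrand extended by its
limit `k²/f(-k²)` at `r = 0`) is continuous and bounded on `[0,∞)` and attains its
maximum at `r = 0`, where `ρ(0) = (M/(2π²))∫₀^∞ k²/f(-k²) dk > 0`. -/
theorem stmt14 (M : ℝ) (hM : 0 < M) (f : ℝ → ℝ)
    (hfc : Continuous f)
    (hfpos : ∀ k : ℝ, 0 < f (-(k ^ 2)))
    (hf0 : f 0 = 1)
    (hgrow : ∃ k₀ > (0:ℝ), ∃ c > (0:ℝ), ∀ k > k₀, c * k ^ 4 ≤ f (-(k ^ 2)))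
    (ρ : ℝ → ℝ)
    (hρ : ∀ r, ρ r = M / (2 * Real.pi ^ 2) * ∫ k in Set.Ioi (0:ℝ),
        (if r = 0 then k ^ 2 / f (-(k ^ 2)) else k * Real.sin (k * r) / (r * f (-(k ^ 2))))) :
    ContinuousOn ρ (Set.Ici 0) ∧
    (∀ r ∈ Set.Ici (0:ℝ), |ρ r| ≤ ρ 0) ∧
    ρ 0 = M / (2 * Real.pi ^ 2) * ∫ k in Set.Ioi (0:ℝ), k ^ 2 / f (-(k ^ 2)) ∧
    0 < ρ 0 := by
  obtain ⟨k₀, hk₀, c, hc, hcf⟩ := hgrow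
  set C := M / (2 * Real.pi ^ 2) with hC
  have hCpos : 0 < C := by
    apply div_pos hM
    positivity
  set g : ℝ → ℝ := fun k => k ^ 2 / f (-(k ^ 2)) with hg
  set G : ℝ → ℝ → ℝ := fun r k =>
    if r = 0 then k ^ 2 / f (-(k ^ 2)) else k * Real.sin (k * r) / (r * f (-(k ^ 2))) with hGdef
  -- key factorization
  have hkey : ∀ r : ℝ, ∀ k : ℝ, 0 < k → G r k = g k * mySinc (k * r) := by
    intro r k hk
    rcases eq_or_ne r 0 with rfl | hr
    · simp [hGdef, hg, mySinc_zero]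
    · have hkr : k * r ≠ 0 := mul_ne_zero hk.ne' hr
      simp only [hGdef, if_neg hr, hg, mySinc_ne _ hkr]
      field_simp [hk.ne', hr, (hfpos k).ne']
  have hnegsq : Continuous fun k : ℝ => -(k ^ 2) := (continuous_pow 2).neg
  have hgcont : Continuous g :=
    (continuous_pow 2).div (hfc.comp hnegsq) (fun k => (hfpos k).ne')
  have hgnonneg : ∀ k : ℝ, 0 ≤ g k := by
    intro k; exact div_nonneg (sq_nonneg k) (hfpos k).le
  -- integrability of g on Ioi 0
  have hInt1 : IntegrableOn g (Ioc 0 k₀) := by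
    exact (hgcont.integrableOn_Icc (a := 0) (b := k₀)).mono_set Ioc_subset_Icc_self
  have hInt2 : IntegrableOn g (Ioi k₀) := by
    have hbound : IntegrableOn (fun k : ℝ => c⁻¹ * k ^ (-2 : ℝ)) (Ioi k₀) :=
      (integrableOn_Ioi_rpow_of_lt (by norm_num) hk₀).const_mul c⁻¹
    refine Integrable.mono' hbound (hgcont.aestronglyMeasurable.restrict) ?_
    refine (ae_restrict_iff' measurableSet_Ioi).mpr (ae_of_all _ ?_)
    intro k hk
    have hkpos : 0 < k := hk₀.trans hk
    have hrpow : k ^ (-2 : ℝ) = (k ^ 2)⁻¹ := by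
      rw [show (-2 : ℝ) = -(2:ℕ) by norm_num, Real.rpow_neg hkpos.le, Real.rpow_natCast]
    have hfk : c * k ^ 4 ≤ f (-(k ^ 2)) := hcf k hk
    have h4 : 0 < c * k ^ 4 := by positivity
    have : g k ≤ k ^ 2 / (c * k ^ 4) :=
      div_le_div_of_nonneg_left (sq_nonneg k) h4 hfk
    rw [Real.norm_eq_abs, abs_of_nonneg (hgnonneg k)]
    calc g k ≤ k ^ 2 / (c * k ^ 4) := this
      _ = c⁻¹ * k ^ (-2 : ℝ) := by
          rw [hrpow]; field_simp
  have hIntg : IntegrableOn g (Ioi 0) := by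
    rw [← Ioc_union_Ioi_eq_Ioi hk₀.le]
    exact hInt1.union hInt2
  -- measurability of G r
  have hGmeas : ∀ r : ℝ, AEStronglyMeasurable (G r) (volume.restrict (Ioi 0)) := by
    intro r
    rcases eq_or_ne r 0 with rfl | hr
    · simpa [hGdef] using hgcont.aestronglyMeasurable.restrict
    · have : Continuous fun k : ℝ => k * Real.sin (k * r) / (r * f (-(k ^ 2))) :=
        (continuous_id.mul (Real.continuous_sin.comp (continuous_id.mul continuous_const))).div
          (continuous_const.mul (hfc.comp hnegsq))
          (fun k => mul_ne_zero hr (hfpos k).ne')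
      simpa [hGdef, if_neg hr] using this.aestronglyMeasurable.restrict
  -- bound
  have hGbound : ∀ r : ℝ, ∀ᵐ k ∂(volume.restrict (Ioi (0:ℝ))), ‖G r k‖ ≤ g k := by
    intro r
    refine (ae_restrict_iff' measurableSet_Ioi).mpr (ae_of_all _ ?_)
    intro k hk
    rw [hkey r k hk, Real.norm_eq_abs, abs_mul, abs_of_nonneg (hgnonneg k)]
    calc g k * |mySinc (k * r)| ≤ g k * 1 :=
          mul_le_mul_of_nonneg_left (abs_mySinc_le_one _) (hgnonneg k)
      _ = g k := mul_one _
  -- continuity of the integral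
  have hIcont : Continuous fun r => ∫ k in Ioi (0:ℝ), G r k := by
    refine continuous_of_dominated hGmeas hGbound hIntg ?_
    refine (ae_restrict_iff' measurableSet_Ioi).mpr (ae_of_all _ ?_)
    intro k hk
    have : (fun r => G r k) = fun r => g k * mySinc (k * r) := by
      funext r; exact hkey r k hk
    rw [this]
    exact continuous_const.mul (mySinc_continuous.comp (continuous_const.mul continuous_id))
  have hρeq : ρ = fun r => C * ∫ k in Ioi (0:ℝ), G r k := funext hρ
  have hρ0 : ρ 0 = C * ∫ k in Ioi (0:ℝ), g k := by
    rw [hρ 0]; simp [hGdef, hg]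
  refine ⟨?_, ?_, ?_, ?_⟩
  · rw [hρeq]
    exact (continuous_const.mul hIcont).continuousOn
  · intro r _
    rw [hρ r, hρ0, abs_mul, abs_of_pos hCpos]
    refine mul_le_mul_of_nonneg_left ?_ hCpos.le
    have := norm_integral_le_of_norm_le hIntg (hGbound r)
    simpa [Real.norm_eq_abs] using this
  · exact hρ0
  · rw [hρ0]
    refine mul_pos hCpos ?_
    have hae : 0 ≤ᵐ[volume.restrict (Ioi (0:ℝ))] g := ae_of_all _ hgnonneg
    rw [setIntegral_pos_iff_support_of_nonneg_ae hae hIntg]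
    have hsub : Ioi (0:ℝ) ⊆ Function.support g ∩ Ioi 0 := by
      intro k hk
      refine ⟨?_, hk⟩
      have : 0 < g k := div_pos (pow_pos hk 2) (hfpos k)
      exact this.ne'
    calc (0:ENNReal) < volume (Ioi (0:ℝ)) := by simp
      _ ≤ volume (Function.support g ∩ Ioi 0) := measure_mono hsub
end
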